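/- arXiv:math/0610811 — 2 statements merged into one kernel-verified Lean document; each statement's English description precedes it below -/
import Mathlib

section
/- Let F: ℝ² → (-∞, ∞] be bounded below with m := |inf F|, and suppose that inf_{x,y ∈ [-a,a]^c} (F(x,y) + m) → ∞ as a → ∞. Then for every L > 0, the set {μ ∈ 𝓜₁(ℝ) : ∫∫ F dμ⊗dμ ≤ L} is uniformly tight, i.e. contained in a relatively compact subset of 𝓜₁(ℝ) in the weak topology. -/
/-!
Write `A_a = [-a, a]ᶜ` and `Φ(a) = inf_{A_a × A_a} (F + m)`. Keeping only the part of
`∫∫ |F + m| dμ⊗dμ` over `A_a × A_a` gives `Φ(a) · μ(A_a)² ≤ L + m` on the level set, so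
`sup_μ μ(A_a) ≤ ((L + m) / Φ(a))^(1/2) → 0`. The level set is therefore tight, and Prokhorov's
theorem makes its closure compact.
-/

open MeasureTheory Filter
open scoped ENNReal Topology

lemma EReal.toENNReal_le_abs (x : EReal) : x.toENNReal ≤ x.abs := by
  induction x using EReal.rec with
  | bot => simp
  | coe r => simpa [EReal.abs_def] using ENNReal.ofReal_le_ofReal (le_abs_self r)
  | top => simp

lemma iInf_toENNReal_mul_le_lintegral_abs {β : Type*} [MeasurableSpace β] (ρ : Measure β)
    (G : β → EReal) {s : Set β} (hs : MeasurableSet s) :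
    (⨅ x ∈ s, G x).toENNReal * ρ s ≤ ∫⁻ x, (G x).abs ∂ρ :=
  calc (⨅ x ∈ s, G x).toENNReal * ρ s ≤ (⨅ x ∈ s, (G x).abs) * ρ s := by
        gcongr
        exact le_iInf₂ fun x hx ↦
          (EReal.toENNReal_le_toENNReal (iInf₂_le x hx)).trans (EReal.toENNReal_le_abs _)
    _ ≤ ∫⁻ x in s, (G x).abs ∂ρ := iInf_mul_le_setLIntegral _ hs
    _ ≤ ∫⁻ x, (G x).abs ∂ρ := setLIntegral_le_lintegral _ _

lemma ENNReal.tendsto_nhds_zero_of_mul_sq_le {ι : Type*} {l : Filter ι} {Φ u : ι → ℝ≥0∞}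
    {C : ℝ≥0∞} (hC : C ≠ ∞) (hΦ : Tendsto Φ l (𝓝 ∞)) (h : ∀ i, Φ i * u i ^ 2 ≤ C) :
    Tendsto u l (𝓝 0) := by
  have hsq : Tendsto (fun i ↦ u i ^ 2) l (𝓝 0) := by
    have hdiv : Tendsto (fun i ↦ C / Φ i) l (𝓝 0) := by
      simpa using ENNReal.Tendsto.const_div hΦ (Or.inr hC)
    refine tendsto_of_tendsto_of_tendsto_of_le_of_le' tendsto_const_nhds hdiv
      (Eventually.of_forall fun _ ↦ zero_le) ?_
    filter_upwards [hΦ.eventually_ne ENNReal.top_ne_zero] with i hi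
    rw [ENNReal.le_div_iff_mul_le (Or.inl hi) (Or.inr hC), mul_comm]
    exact h i
  have hroot := (ENNReal.continuous_rpow_const (y := ((2 : ℕ)⁻¹ : ℝ))).tendsto 0 |>.comp hsq
  simp only [Function.comp_def, ENNReal.pow_rpow_inv_natCast two_ne_zero] at hroot
  simpa using hroot

lemma ENNReal.le_ofReal_add_of_coe_sub_le {I : ℝ≥0∞} {m L : ℝ}
    (h : (I : EReal) - m ≤ L) : I ≤ ENNReal.ofReal (L + m) := by
  rw [EReal.sub_le_iff_le_add (by simp) (by simp), ← EReal.coe_add] at h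
  simpa only [EReal.toENNReal_coe, EReal.real_coe_toENNReal] using EReal.toENNReal_le_toENNReal h

theorem energy_level_sets_tight_general (F : ℝ × ℝ → EReal) (m : ℝ)
    (hcoer : Tendsto (fun a : ℝ =>
        ⨅ p ∈ {q : ℝ × ℝ | a < |q.1| ∧ a < |q.2|}, (F p + (m : EReal)))
      atTop atTop) :
    ∀ L : ℝ, 0 < L →
      IsCompact (closure {μ : ProbabilityMeasure ℝ |
        ((∫⁻ p, (F p + (m : EReal)).abs
            ∂((μ : Measure ℝ).prod (μ : Measure ℝ)) : ℝ≥0∞) : EReal) - (m : EReal)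
          ≤ (L : EReal)}) := by
  intro L _
  refine isCompact_closure_of_isTightMeasureSet (isTightMeasureSet_of_tendsto_measure_norm_gt ?_)
  simp only [Real.norm_eq_abs]
  have hcoer_top : Tendsto (fun a : ℝ ↦
      (⨅ p ∈ {x : ℝ | a < |x|} ×ˢ {x : ℝ | a < |x|}, F p + (m : EReal)).toENNReal)
      atTop (𝓝 ∞) :=
    (EReal.continuous_toENNReal.tendsto ⊤).comp
      (EReal.tendsto_nhds_top_iff_real.2 fun x ↦
        (hcoer.eventually_ge_atTop ((x + 1 : ℝ) : EReal)).mono fun _ h ↦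
          lt_of_lt_of_le (EReal.coe_lt_coe_iff.2 (lt_add_one x)) h)
  refine ENNReal.tendsto_nhds_zero_of_mul_sq_le (ENNReal.ofReal_ne_top (r := L + m)) hcoer_top
    fun a ↦ ?_
  simp only [ENNReal.iSup₂_pow_of_ne_zero _ two_ne_zero, ENNReal.mul_iSup]
  refine iSup₂_le ?_
  rintro _ ⟨μ, hμ, rfl⟩
  have hA : MeasurableSet {x : ℝ | a < |x|} := measurableSet_Ioi.preimage measurable_abs
  calc _ = _ * ((μ : Measure ℝ).prod μ) ({x : ℝ | a < |x|} ×ˢ {x : ℝ | a < |x|}) := by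
        rw [Measure.prod_prod, sq]
    _ ≤ _ := iInf_toENNReal_mul_le_lintegral_abs _ _ (hA.prod hA)
    _ ≤ _ := ENNReal.le_ofReal_add_of_coe_sub_le hμ

/-- If `F : ℝ² → (-∞,∞]` is bounded below by `-m` and
`inf_{|x|,|y| > a} (F + m) → ∞` as `a → ∞`, then for every `L > 0` the level set
`{μ : ∫∫ F dμ⊗dμ ≤ L}` is relatively compact in the weak topology. -/
theorem energy_level_sets_tight (F : ℝ × ℝ → EReal) (m : ℝ)
    (hbd : ∀ p, (0 : EReal) ≤ F p + (m : EReal))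
    (hcoer : Tendsto (fun a : ℝ =>
        ⨅ p ∈ {q : ℝ × ℝ | a < |q.1| ∧ a < |q.2|}, (F p + (m : EReal)))
      atTop atTop) :
    ∀ L : ℝ, 0 < L →
      IsCompact (closure {μ : ProbabilityMeasure ℝ |
        ((∫⁻ p, (F p + (m : EReal)).abs
            ∂((μ : Measure ℝ).prod (μ : Measure ℝ)) : ℝ≥0∞) : EReal) - (m : EReal)
          ≤ (L : EReal)}) :=
  energy_level_sets_tight_general F m hcoer
end

section
/- Fix σ² > 0, β > 0, and κ ∈ (0, 1/2]. Let a = 2σ²β(1/2 - √(κ(1-κ))) and b = 2σ²β(1/2 + √(κ(1-κ))). Then the function x ↦ (1/(σ²βκπ x)) · √((x² - a)(b - x²)) on [√a, √b] (extended by 0 elsewhere) is a probability density: its Lebesgue integral over [√a, √b] equals 1. -/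
/-!
The substitution `u = x²` turns the integral into `½ ∫ₐᵇ √((u - a)(b - u)) / u du`, the
normalisation of the Marchenko–Pastur law, which has an elementary primitive built from
`√((u - a)(b - u))` and two arcsines. Evaluating it at the edges gives
`∫_{√a}^{√b} √((x² - a)(b - x²)) / x dx = π/4 · (a + b - 2√(ab)) = π/4 · (√b - √a)²`.
For the chiral edges `a + b = 2σ²β` and `√(ab) = 2σ²β(1/2 - κ)`, so this equals `πσ²βκ`.
-/

open MeasureTheory Real Set

theorem HasDerivAt.arcsin_div {f g : ℝ → ℝ} {f' g' x : ℝ} (hf : HasDerivAt f f' x)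
    (hg : HasDerivAt g g' x) (hfg : |f x| < g x) :
    HasDerivAt (fun y => arcsin (f y / g y))
      ((f' * g x - f x * g') / (g x * √(g x ^ 2 - f x ^ 2))) x := by
  have hg0 : 0 < g x := (abs_nonneg _).trans_lt hfg
  obtain ⟨hlo, hhi⟩ := abs_lt.1 hfg
  have hdisc : 0 < g x ^ 2 - f x ^ 2 := by nlinarith
  have hroot : √(1 - (f x / g x) ^ 2) = √(g x ^ 2 - f x ^ 2) / g x := by
    rw [div_pow, one_sub_div (by positivity), sqrt_div' _ (by positivity), sqrt_sq hg0.le]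
  have hlo' : -1 < f x / g x := by rwa [lt_div_iff₀ hg0, neg_one_mul]
  have hhi' : f x / g x < 1 := by rwa [div_lt_one hg0]
  refine ((hasDerivAt_arcsin hlo'.ne' hhi'.ne).comp x (hf.div hg hg0.ne')).congr_deriv ?_
  rw [hroot]
  field_simp [(sqrt_pos.2 hdisc).ne']

section Primitive

variable {a b x : ℝ}

/-- With `u = x²`, `R = (u - a)(b - u)` and `m = (a + b)/2`, one has
`√R / x = (1/2) ((m - u) + m - ab/u) / √R · du/dx`, and the three summands have the primitives
`√R`, `m arcsin ((u - m)/((b - a)/2))` and `-√(ab) arcsin ((m u - ab)/((b - a)/2 · u))`. -/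
noncomputable def chiralPrimitive (a b x : ℝ) : ℝ :=
  (√((x ^ 2 - a) * (b - x ^ 2)) - (a + b) / 2 * arcsin (((a + b) / 2 - x ^ 2) / ((b - a) / 2))
    - √(a * b) * arcsin (((a + b) / 2 * x ^ 2 - a * b) / ((b - a) / 2 * x ^ 2))) / 2

theorem hasDerivAt_sqrt_mul_sub_sq (h1 : a < x ^ 2) (h2 : x ^ 2 < b) :
    HasDerivAt (fun y => √((y ^ 2 - a) * (b - y ^ 2)))
      (x * (a + b - 2 * x ^ 2) / √((x ^ 2 - a) * (b - x ^ 2))) x := by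
  have hP : 0 < (x ^ 2 - a) * (b - x ^ 2) := mul_pos (by linarith) (by linarith)
  have hsq : HasDerivAt (fun y : ℝ => y ^ 2) (2 * x) x := by simpa using hasDerivAt_pow 2 x
  refine (((hsq.sub_const a).mul ((hasDerivAt_const x b).sub hsq)).sqrt hP.ne').congr_deriv ?_
  dsimp only [Pi.sub_apply, Pi.mul_apply]
  field_simp
  ring

theorem hasDerivAt_arcsin_sub_sq (h1 : a < x ^ 2) (h2 : x ^ 2 < b) :
    HasDerivAt (fun y => arcsin (((a + b) / 2 - y ^ 2) / ((b - a) / 2)))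
      (-2 * x / √((x ^ 2 - a) * (b - x ^ 2))) x := by
  have hsq : HasDerivAt (fun y : ℝ => y ^ 2) (2 * x) x := by simpa using hasDerivAt_pow 2 x
  have hfg : |(a + b) / 2 - x ^ 2| < (b - a) / 2 := abs_lt.2 ⟨by linarith, by linarith⟩
  refine (((hasDerivAt_const x ((a + b) / 2)).sub hsq).arcsin_div (hasDerivAt_const x _)
    hfg).congr_deriv ?_
  dsimp only [Pi.sub_apply]
  have hba : b - a ≠ 0 := by linarith
  rw [show ((b - a) / 2) ^ 2 - ((a + b) / 2 - x ^ 2) ^ 2 = (x ^ 2 - a) * (b - x ^ 2) by ring]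
  field_simp
  ring

theorem hasDerivAt_sqrt_mul_arcsin_inv_sq (ha : 0 ≤ a) (h1 : a < x ^ 2) (h2 : x ^ 2 < b) :
    HasDerivAt (fun y => √(a * b) * arcsin (((a + b) / 2 * y ^ 2 - a * b) / ((b - a) / 2 * y ^ 2)))
      (2 * a * b / (x * √((x ^ 2 - a) * (b - x ^ 2)))) x := by
  rcases ha.eq_or_lt with rfl | ha
  · simpa using hasDerivAt_const x (0 : ℝ)
  have hab : 0 < a * b := mul_pos ha (by linarith)
  have hP : 0 < (x ^ 2 - a) * (b - x ^ 2) := mul_pos (by linarith) (by linarith)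
  have hx : x ≠ 0 := by rintro rfl; linarith
  have hsq : HasDerivAt (fun y : ℝ => y ^ 2) (2 * x) x := by simpa using hasDerivAt_pow 2 x
  have hdisc : ((b - a) / 2 * x ^ 2) ^ 2 - ((a + b) / 2 * x ^ 2 - a * b) ^ 2
      = a * b * ((x ^ 2 - a) * (b - x ^ 2)) := by ring
  have hfg : |(a + b) / 2 * x ^ 2 - a * b| < (b - a) / 2 * x ^ 2 :=
    abs_lt_of_sq_lt_sq (by nlinarith [mul_pos hab hP]) (mul_nonneg (by linarith) (sq_nonneg x))
  refine ((((hsq.const_mul _).sub_const _).arcsin_div (hsq.const_mul _) hfg).const_mul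
    √(a * b)).congr_deriv ?_
  have hba : b - a ≠ 0 := by linarith
  rw [hdisc, sqrt_mul hab.le]
  field_simp
  ring

theorem hasDerivAt_chiralPrimitive (ha : 0 ≤ a) (h1 : a < x ^ 2) (h2 : x ^ 2 < b) :
    HasDerivAt (chiralPrimitive a b) (√((x ^ 2 - a) * (b - x ^ 2)) / x) x := by
  have hP : 0 < (x ^ 2 - a) * (b - x ^ 2) := mul_pos (by linarith) (by linarith)
  have hx : x ≠ 0 := by rintro rfl; linarith
  refine ((((hasDerivAt_sqrt_mul_sub_sq h1 h2).sub
    ((hasDerivAt_arcsin_sub_sq h1 h2).const_mul ((a + b) / 2))).sub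
    (hasDerivAt_sqrt_mul_arcsin_inv_sq ha h1 h2)).div_const 2).congr_deriv ?_
  have hroot := sq_sqrt hP.le
  field_simp
  linear_combination (-2) * hroot

theorem continuousOn_chiralPrimitive (ha : 0 ≤ a) (hab : a < b) :
    ContinuousOn (chiralPrimitive a b) (Icc √a √b) := by
  have hthird : ContinuousOn (fun y => √(a * b) *
      arcsin (((a + b) / 2 * y ^ 2 - a * b) / ((b - a) / 2 * y ^ 2))) (Icc √a √b) := by
    rcases ha.eq_or_lt with rfl | ha
    · simpa using continuousOn_const
    refine continuousOn_const.mul (continuous_arcsin.comp_continuousOn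
      (ContinuousOn.div (by fun_prop) (by fun_prop) fun y hy => ?_))
    have hy : 0 < y := (sqrt_pos.2 ha).trans_le hy.1
    have : 0 < b - a := by linarith
    positivity
  unfold chiralPrimitive
  refine ContinuousOn.div_const (ContinuousOn.sub ?_ hthird) 2
  exact Continuous.continuousOn (by fun_prop)

theorem chiralPrimitive_sqrt_sub_chiralPrimitive_sqrt (ha : 0 ≤ a) (hab : a < b) :
    chiralPrimitive a b √b - chiralPrimitive a b √a = π / 4 * (a + b - 2 * √(a * b)) := by
  have hb : 0 < b := ha.trans_lt hab
  have hba : b - a ≠ 0 := by linarith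
  have hlow : √(a * b) * arcsin (((a + b) / 2 * a - a * b) / ((b - a) / 2 * a))
      = -(√(a * b) * (π / 2)) := by
    rcases ha.eq_or_lt with rfl | ha
    · simp
    · rw [show ((a + b) / 2 * a - a * b) / ((b - a) / 2 * a) = -1 by field_simp; ring,
        arcsin_neg_one, mul_neg]
  unfold chiralPrimitive
  rw [sq_sqrt ha, sq_sqrt hb.le, hlow,
    show ((a + b) / 2 - b) / ((b - a) / 2) = -1 by field_simp; ring,
    show ((a + b) / 2 - a) / ((b - a) / 2) = 1 by field_simp; ring,
    show ((a + b) / 2 * b - a * b) / ((b - a) / 2 * b) = 1 by field_simp; ring,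
    arcsin_neg_one, arcsin_one]
  simp only [sub_self, zero_mul, mul_zero, sqrt_zero]
  ring

theorem integral_sqrt_mul_sub_sq_div (ha : 0 ≤ a) (hab : a < b) :
    ∫ x in √a..√b, √((x ^ 2 - a) * (b - x ^ 2)) / x = π / 4 * (a + b - 2 * √(a * b)) := by
  have hle : √a ≤ √b := sqrt_le_sqrt hab.le
  have hcont := continuousOn_chiralPrimitive ha hab
  have hderiv : ∀ x ∈ Ioo √a √b,
      HasDerivAt (chiralPrimitive a b) (√((x ^ 2 - a) * (b - x ^ 2)) / x) x := by
    intro x ⟨hax, hxb⟩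
    have hx : 0 < x := (sqrt_nonneg a).trans_lt hax
    exact hasDerivAt_chiralPrimitive ha ((sqrt_lt' hx).1 hax) ((lt_sqrt hx.le).1 hxb)
  have hint : IntegrableOn (fun x => √((x ^ 2 - a) * (b - x ^ 2)) / x) (Ioc √a √b) :=
    intervalIntegral.integrableOn_deriv_of_nonneg hcont hderiv
      fun x hx => div_nonneg (sqrt_nonneg _) ((sqrt_nonneg a).trans hx.1.le)
  rw [intervalIntegral.integral_eq_sub_of_hasDerivAt_of_le hle hcont hderiv
    ((intervalIntegrable_iff_integrableOn_Ioc_of_le hle).2 hint),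
    chiralPrimitive_sqrt_sub_chiralPrimitive_sqrt ha hab]

end Primitive

theorem sqrt_mul_one_sub_le_half (κ : ℝ) : √(κ * (1 - κ)) ≤ 1 / 2 :=
  sqrt_le_iff.2 ⟨by norm_num, by nlinarith [sq_nonneg (κ - 1 / 2)]⟩

theorem sqrt_mul_chiral_edges {c κ : ℝ} (hc : 0 ≤ c) (hκ₀ : 0 ≤ κ) (hκ : κ ≤ 1 / 2) :
    √(c * (1 / 2 - √(κ * (1 - κ))) * (c * (1 / 2 + √(κ * (1 - κ))))) = c * (1 / 2 - κ) := by
  have hs := sq_sqrt (mul_nonneg hκ₀ (by linarith : 0 ≤ 1 - κ))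
  rw [← sqrt_sq (mul_nonneg hc (by linarith : 0 ≤ 1 / 2 - κ))]
  congr 1
  linear_combination (-c ^ 2) * hs

/-- The limiting positive-eigenvalue density of the chiral Gaussian ensembles,
`x ↦ (1/(σ²βκπx))√((x²-a)(b-x²))` on `[√a, √b]` with
`a = 2σ²β(1/2 - √(κ(1-κ)))`, `b = 2σ²β(1/2 + √(κ(1-κ)))`, integrates to `1`. -/
theorem chiral_density_integral (σ2 β κ : ℝ) (hσ : 0 < σ2) (hβ : 0 < β)
    (hκ1 : 0 < κ) (hκ2 : κ ≤ 1 / 2) :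
    ∫ x in Set.Icc (Real.sqrt (2 * σ2 * β * (1 / 2 - Real.sqrt (κ * (1 - κ)))))
        (Real.sqrt (2 * σ2 * β * (1 / 2 + Real.sqrt (κ * (1 - κ))))),
      1 / (σ2 * β * κ * Real.pi * x) *
        Real.sqrt ((x ^ 2 - 2 * σ2 * β * (1 / 2 - Real.sqrt (κ * (1 - κ)))) *
          (2 * σ2 * β * (1 / 2 + Real.sqrt (κ * (1 - κ))) - x ^ 2)) = 1 := by
  have hc : 0 < 2 * σ2 * β := by positivity
  have hs : 0 < √(κ * (1 - κ)) := sqrt_pos.2 (mul_pos hκ1 (by linarith))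
  have hedges := sqrt_mul_chiral_edges hc.le hκ1.le hκ2
  set a := 2 * σ2 * β * (1 / 2 - √(κ * (1 - κ)))
  set b := 2 * σ2 * β * (1 / 2 + √(κ * (1 - κ)))
  have ha : 0 ≤ a := mul_nonneg hc.le (by linarith [sqrt_mul_one_sub_le_half κ])
  have hab : a < b := mul_lt_mul_of_pos_left (by linarith) hc
  have hintegrand : ∀ x : ℝ, 1 / (σ2 * β * κ * π * x) * √((x ^ 2 - a) * (b - x ^ 2))
      = (σ2 * β * κ * π)⁻¹ * (√((x ^ 2 - a) * (b - x ^ 2)) / x) := fun x => by ring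
  rw [integral_Icc_eq_integral_Ioc, ← intervalIntegral.integral_of_le (sqrt_le_sqrt hab.le)]
  simp_rw [hintegrand]
  rw [intervalIntegral.integral_const_mul, integral_sqrt_mul_sub_sq_div ha hab, hedges]
  field_simp
  ring
end
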